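/- arXiv:1403.0386 — 3 statements merged into one kernel-verified Lean document; each statement's English description precedes it below -/
import Mathlib

section
/- For λ = 2, the random variable S(2) has the uniform distribution on [−1,1]; that is, the pushforward measure ℙ ∘ S(2)⁻¹ equals (1/2)·(Lebesgue measure restricted to [−1,1]). -/
/-!
The characteristic function of `S(2)` is the limit of those of the partial sums, which by
independence are `∏_{n<m} cos (t / 2^(n+1))`. Iterating `sin x = 2 sin (x/2) cos (x/2)` shows
that this product tends to `sinc t = sin t / t`, the characteristic function of the uniform
law on `[-1, 1]`.
-/

open MeasureTheory ProbabilityTheory Finset Filter Topology Real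

lemma sinc_eq_sinc_half_mul_cos (x : ℝ) : sinc x = sinc (x / 2) * cos (x / 2) := by
  rcases eq_or_ne x 0 with rfl | hx
  · simp
  rw [sinc_of_ne_zero hx, sinc_of_ne_zero (by positivity)]
  conv_lhs => rw [← mul_div_cancel₀ x (two_ne_zero' ℝ), sin_two_mul]
  field_simp

lemma sinc_eq_sinc_div_two_pow_mul_prod_cos (x : ℝ) (m : ℕ) :
    sinc x = sinc (x / 2 ^ m) * ∏ n ∈ range m, cos (x / 2 ^ (n + 1)) := by
  induction m with
  | zero => simp
  | succ m ih =>
    rw [ih, sinc_eq_sinc_half_mul_cos, prod_range_succ, div_div, ← pow_succ]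
    ring

lemma tendsto_prod_cos_div_two_pow (x : ℝ) :
    Tendsto (fun m ↦ ∏ n ∈ range m, cos (x / 2 ^ (n + 1))) atTop (𝓝 (sinc x)) := by
  have hsinc : Tendsto (fun m : ℕ ↦ sinc (x / 2 ^ m)) atTop (𝓝 1) := by
    have := (tendsto_pow_atTop_nhds_zero_of_lt_one (by norm_num : (0 : ℝ) ≤ 2⁻¹)
      (by norm_num)).const_mul x
    rw [mul_zero] at this
    simpa [div_eq_mul_inv, Function.comp_def] using (continuous_sinc.tendsto 0).comp this
  have hlim := tendsto_const_nhds (x := sinc x) |>.div hsinc one_ne_zero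
  rw [div_one] at hlim
  refine hlim.congr' ?_
  filter_upwards [hsinc.eventually_ne one_ne_zero] with m hm
  rw [Pi.div_apply, div_eq_iff hm, mul_comm, ← sinc_eq_sinc_div_two_pow_mul_prod_cos]

lemma charFun_half_smul_restrict_Icc (t : ℝ) :
    charFun ((1 / 2 : ENNReal) • volume.restrict (Set.Icc (-1 : ℝ) 1)) t = sinc t := by
  rw [charFun_apply_real, integral_smul_measure, integral_Icc_eq_integral_Ioc,
    ← intervalIntegral.integral_of_le (by norm_num)]
  rcases eq_or_ne t 0 with rfl | ht
  · norm_num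
  have hmul (x : ℝ) : (t : ℂ) * x * Complex.I = ((t * x : ℝ) : ℂ) * Complex.I := by
    push_cast; ring
  simp_rw [hmul]
  rw [intervalIntegral.integral_comp_mul_left (fun x ↦ Complex.exp (x * Complex.I)) ht,
    mul_neg_one, mul_one, integral_exp_mul_I_eq_sinc]
  have ht' : (t : ℂ) ≠ 0 := Complex.ofReal_ne_zero.2 ht
  norm_num
  field_simp

section Rademacher

variable {Ω : Type*} [MeasurableSpace Ω] {P : Measure Ω} [IsProbabilityMeasure P] {X : Ω → ℝ}

lemma ae_eq_one_or_eq_neg_one (hX : Measurable X) (h1 : P {ω | X ω = 1} = 1 / 2)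
    (h2 : P {ω | X ω = -1} = 1 / 2) : ∀ᵐ ω ∂P, X ω = 1 ∨ X ω = -1 := by
  have hm (a : ℝ) : MeasurableSet {ω | X ω = a} := measurableSet_eq_fun hX measurable_const
  have hdisj : Disjoint {ω | X ω = 1} {ω | X ω = -1} :=
    Set.disjoint_left.2 fun ω (h : X ω = 1) (h' : X ω = -1) ↦ by linarith
  have hunion : P ({ω | X ω = 1} ∪ {ω | X ω = -1}) = P Set.univ := by
    rw [measure_union hdisj (hm _), h1, h2, ENNReal.add_halves, measure_univ]
  exact (ae_iff_measure_eq ((hm 1).union (hm (-1))).nullMeasurableSet).2 hunion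

lemma charFun_map_eq_cos (hX : Measurable X) (h1 : P {ω | X ω = 1} = 1 / 2)
    (h2 : P {ω | X ω = -1} = 1 / 2) (t : ℝ) : charFun (P.map X) t = cos t := by
  have hm (a : ℝ) : MeasurableSet {ω | X ω = a} := measurableSet_eq_fun hX measurable_const
  rw [charFun_apply_real, integral_map hX.aemeasurable (by fun_prop)]
  have hsplit : (fun ω ↦ Complex.exp (t * X ω * Complex.I)) =ᵐ[P]
      fun ω ↦ {ω | X ω = 1}.indicator (fun _ ↦ Complex.exp (t * Complex.I)) ω +
        {ω | X ω = -1}.indicator (fun _ ↦ Complex.exp (-t * Complex.I)) ω := by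
    filter_upwards [ae_eq_one_or_eq_neg_one hX h1 h2] with ω hω
    rcases hω with hω | hω <;> norm_num [Set.indicator, hω]
  rw [integral_congr_ae hsplit, integral_add, integral_indicator_const _ (hm 1),
    integral_indicator_const _ (hm (-1)), measureReal_def, measureReal_def, h1, h2,
    Complex.ofReal_cos, Complex.cos]
  · norm_num
    ring
  all_goals exact (integrable_const _).indicator (hm _)

lemma charFun_map_sum_mul_eq_prod_cos {ι : Type*} {X : ι → Ω → ℝ} (hmeas : ∀ i, Measurable (X i))
    (hindep : iIndepFun X P) (h1 : ∀ i, P {ω | X i ω = 1} = 1 / 2)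
    (h2 : ∀ i, P {ω | X i ω = -1} = 1 / 2) (a : ι → ℝ) (s : Finset ι) (t : ℝ) :
    charFun (P.map fun ω ↦ ∑ i ∈ s, a i * X i ω) t = ∏ i ∈ s, cos (a i * t) := by
  have hindep' : iIndepFun (fun i ω ↦ a i * X i ω) P :=
    hindep.comp (fun i x ↦ a i * x) fun i ↦ measurable_const_mul (a i)
  rw [hindep'.restrict s |>.charFun_map_fun_finsetSum_eq_prod
    fun i _ ↦ ((hmeas i).const_mul (a i)).aemeasurable, prod_apply, Complex.ofReal_prod]
  refine prod_congr rfl fun i _ ↦ ?_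
  rw [charFun_map_mul_comp (hmeas i).aemeasurable, charFun_map_eq_cos (hmeas i) (h1 i) (h2 i)]

end Rademacher

lemma tendsto_charFun_map_of_ae_tendsto {Ω E : Type*} [MeasurableSpace Ω] {P : Measure Ω}
    [IsFiniteMeasure P] [NormedAddCommGroup E] [InnerProductSpace ℝ E] [MeasurableSpace E]
    [BorelSpace E] {Y : ℕ → Ω → E} {Z : Ω → E} (hY : ∀ m, AEMeasurable (Y m) P)
    (hlim : ∀ᵐ ω ∂P, Tendsto (fun m ↦ Y m ω) atTop (𝓝 (Z ω))) (t : E) :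
    Tendsto (fun m ↦ charFun (P.map (Y m)) t) atTop (𝓝 (charFun (P.map Z) t)) := by
  have hmap : ∀ {W : Ω → E}, AEMeasurable W P →
      charFun (P.map W) t = ∫ ω, Complex.exp (inner ℝ (W ω) t * Complex.I) ∂P :=
    fun hW ↦ integral_map hW (by fun_prop)
  simp_rw [hmap (hY _), hmap (aemeasurable_of_tendsto_metrizable_ae' hY hlim)]
  have hcont : Continuous fun x : E ↦ Complex.exp (inner ℝ x t * Complex.I) := by fun_prop
  refine tendsto_integral_of_dominated_convergence (fun _ ↦ 1)
    (fun m ↦ (hcont.measurable.comp_aemeasurable (hY m)).aestronglyMeasurable)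
    (integrable_const 1) (fun m ↦ ae_of_all _ fun ω ↦ ?_) ?_
  · rw [Complex.norm_exp_ofReal_mul_I]
  · filter_upwards [hlim] with ω hω
    exact (hcont.tendsto _).comp hω

/-- `S(2)` has the uniform distribution on `[-1, 1]`. -/
theorem stmt_1 {Ω : Type*} [MeasurableSpace Ω] (P : Measure Ω) [IsProbabilityMeasure P]
    (X : ℕ → Ω → ℝ) (hmeas : ∀ n, Measurable (X n))
    (hindep : iIndepFun X P)
    (h1 : ∀ n, P {ω | X n ω = 1} = 1 / 2) (h2 : ∀ n, P {ω | X n ω = -1} = 1 / 2)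
    (S : ℝ → Ω → ℝ)
    (hS : ∀ l : ℝ, 1 < l → ∀ ω, S l ω = ∑' n : ℕ, l ^ (-(n + 1 : ℤ)) * X n ω) :
    P.map (S 2) = (1 / 2 : ENNReal) • (volume.restrict (Set.Icc (-1 : ℝ) 1)) := by
  set a : ℕ → ℝ := fun n ↦ (2 : ℝ) ^ (-(n + 1 : ℤ))
  have ha_eq (n : ℕ) : a n = (2 ^ (n + 1))⁻¹ := by
    rw [← zpow_natCast, ← zpow_neg]
    push_cast
    rfl
  have ha_mul (n : ℕ) (t : ℝ) : a n * t = t / 2 ^ (n + 1) := by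
    rw [ha_eq, inv_mul_eq_div]
  have hsummable : Summable fun n ↦ |a n| := by
    simpa [ha_eq, pow_succ] using summable_geometric_two.mul_left (1 / 2 : ℝ)
  have hlim : ∀ᵐ ω ∂P, Tendsto (fun m ↦ ∑ n ∈ range m, a n * X n ω) atTop (𝓝 (S 2 ω)) := by
    filter_upwards [ae_all_iff.2 fun n ↦ ae_eq_one_or_eq_neg_one (hmeas n) (h1 n) (h2 n)]
      with ω hω
    rw [hS 2 one_lt_two ω]
    refine (hsummable.of_norm_bounded fun n ↦ ?_).hasSum.tendsto_sum_nat
    rcases hω n with h | h <;> simp [h]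
  have : IsFiniteMeasure ((1 / 2 : ENNReal) • volume.restrict (Set.Icc (-1 : ℝ) 1)) :=
    ⟨by simp [ENNReal.mul_lt_top]⟩
  refine Measure.ext_of_charFun (funext fun t ↦ ?_)
  rw [charFun_half_smul_restrict_Icc]
  refine tendsto_nhds_unique
    (tendsto_charFun_map_of_ae_tendsto (fun m ↦ by fun_prop) hlim t) ?_
  simp_rw [charFun_map_sum_mul_eq_prod_cos hmeas hindep h1 h2, ha_mul]
  exact_mod_cast (tendsto_prod_cos_div_two_pow t).ofReal
end

section
/- For every λ > 1 and all integers n ≥ 1 and k ≥ 1, m_{2n}(λ) = (λ^{2kn} − 1)^{−1} · Σ_{j=0}^{n−1} C(2n, 2j) · m_{2j}(λ) · W^{(k)}_{2(n−j)}(λ). -/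
/-!
Split `S(λ) = λ^{-k} S' + Y` with `Y = ∑_{i<k} λ^{-(i+1)} X_i` and
`S' = ∑_i λ^{-(i+1)} X_{k+i}`. The tail `S'` is independent of `Y`, and since the law of an
i.i.d. sequence is invariant under shifts, `S'` has the moments of `S(λ)`. Expanding
`E[(λ^{-k} S' + Y)^{2n}]` binomially, the odd moments of `Y` vanish by sign symmetry, while
`E[Y^{2(n-j)}]` is an average over sign vectors which, once `λ^{-k}` is factored out, the block
is reversed and its leading sign is fixed to `+1`, equals `λ^{-2k(n-j)} W^{(k)}_{2(n-j)}(λ)`.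
The term `j = n` of the expansion is `λ^{-2kn} m_{2n}`; solving for `m_{2n}` gives the formula.
-/

open MeasureTheory ProbabilityTheory Finset

/-- The quantity `W^(k)_(2m)(λ) = 2^(-(k-1)) ∑_{(i_1,…,i_(k-1)) ∈ {0,1}^(k-1)}
(1 + ∑_{j=1}^{k-1} (2 i_j - 1) λ^j)^(2m)`; for `k = 1` it equals `1`. -/
noncomputable def W (k mm : ℕ) (l : ℝ) : ℝ :=
  (∑ i : Fin (k - 1) → Bool,
      (1 + ∑ j : Fin (k - 1), (2 * (if i j then (1 : ℝ) else 0) - 1) * l ^ ((j : ℕ) + 1))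
        ^ (2 * mm)) / 2 ^ (k - 1)

open Function

def boolSign (b : Bool) : ℝ := if b then 1 else -1

@[simp] lemma boolSign_true : boolSign true = 1 := rfl

@[simp] lemma boolSign_false : boolSign false = -1 := rfl

@[simp] lemma boolSign_not (b : Bool) : boolSign (!b) = -boolSign b := by
  cases b <;> simp

lemma boolSign_injective : Injective boolSign := by
  intro a b h; revert h; cases a <;> cases b <;> norm_num [boolSign]

lemma sum_boolSign_neg {κ M : Type*} [Fintype κ] [DecidableEq κ] [AddCommMonoid M]
    (F : (κ → ℝ) → M) :
    ∑ ε : κ → Bool, F (fun j => -boolSign (ε j)) = ∑ ε : κ → Bool, F (fun j => boolSign (ε j)) :=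
  Fintype.sum_bijective (fun ε j => !ε j) (Involutive.bijective fun ε => by simp) _ _
    fun ε => by simp

lemma W_zero (k : ℕ) (l : ℝ) : W k 0 l = 1 := by
  simp [W]

lemma W_eq_sum_boolSign {k : ℕ} (hk : 1 ≤ k) (u : ℕ) (l : ℝ) :
    W k u l
      = (∑ ε : Fin k → Bool, (∑ j : Fin k, l ^ (j : ℕ) * boolSign (ε j)) ^ (2 * u)) / 2 ^ k := by
  obtain ⟨K, rfl⟩ : ∃ K, k = K + 1 := ⟨k - 1, by omega⟩
  have hsign (b : Bool) : 2 * (if b then (1 : ℝ) else 0) - 1 = boolSign b := by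
    cases b <;> norm_num
  have hcons (b : Bool) (ε : Fin K → Bool) :
      ∑ j : Fin (K + 1), l ^ (j : ℕ) * boolSign ((Fin.cons b ε : Fin (K + 1) → Bool) j)
        = boolSign b + ∑ j : Fin K, boolSign (ε j) * l ^ ((j : ℕ) + 1) := by
    simp [Fin.sum_univ_succ, mul_comm]
  -- flipping every sign shows that the first sign may be taken to be `+1`
  have hfalse : ∑ ε : Fin K → Bool,
      (boolSign false + ∑ j : Fin K, boolSign (ε j) * l ^ ((j : ℕ) + 1)) ^ (2 * u)
      = ∑ ε : Fin K → Bool, (1 + ∑ j : Fin K, boolSign (ε j) * l ^ ((j : ℕ) + 1)) ^ (2 * u) := by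
    rw [← sum_boolSign_neg
      fun x : Fin K → ℝ => (boolSign false + ∑ j : Fin K, x j * l ^ ((j : ℕ) + 1)) ^ (2 * u)]
    refine sum_congr rfl fun ε _ => ?_
    rw [← (even_two_mul u).neg_pow]
    simp only [boolSign_false, neg_mul, sum_neg_distrib]
    ring
  rw [W, Nat.add_sub_cancel, ← (Fin.consEquiv fun _ => Bool).sum_comp, Fintype.sum_prod_type,
    Fintype.sum_bool]
  simp only [Fin.consEquiv_apply, hcons, hfalse, hsign, boolSign_true]
  rw [pow_succ]
  ring

lemma ProbabilityTheory.iIndepFun.indepFun_of_measurable_biSup {Ω ι β γ γ' : Type*}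
    [MeasurableSpace Ω] {P : Measure Ω} [mβ : MeasurableSpace β] [MeasurableSpace γ]
    [MeasurableSpace γ'] {X : ι → Ω → β} (hmeas : ∀ i, Measurable (X i))
    (hX : iIndepFun X P) {S T : Set ι} (hST : Disjoint S T) {f : Ω → γ} {g : Ω → γ'}
    (hf : Measurable[⨆ i ∈ S, mβ.comap (X i)] f) (hg : Measurable[⨆ i ∈ T, mβ.comap (X i)] g) :
    IndepFun f g P := by
  have h := indep_iSup_of_disjoint (fun i => (hmeas i).comap_le) hX.iIndep hST
  exact (IndepFun_iff_Indep f g P).2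
    (indep_of_indep_of_le_right (indep_of_indep_of_le_left h hf.comap_le) hg.comap_le)

lemma ProbabilityTheory.iIndepFun.indepFun_tsum_shift_sum_range {Ω : Type*} [MeasurableSpace Ω]
    {P : Measure Ω} {X : ℕ → Ω → ℝ} (hmeas : ∀ i, Measurable (X i)) (hX : iIndepFun X P)
    (a b : ℕ → ℝ) (k : ℕ) :
    IndepFun (fun ω => ∑' i, a i * X (k + i) ω) (fun ω => ∑ i ∈ range k, b i * X i ω) P := by
  let mX (j : ℕ) : MeasurableSpace Ω := MeasurableSpace.comap (X j) inferInstance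
  refine hX.indepFun_of_measurable_biSup hmeas (S := Set.Ici k) (T := Set.Iio k)
    (Set.Ici_disjoint_Iio le_rfl) ?_ ?_
  · have hsum : Measurable fun x : ℕ → ℝ => ∑' i, a i * x i :=
      Measurable.tsum fun i => (measurable_pi_apply i).const_mul _
    let _ : MeasurableSpace Ω := ⨆ j ∈ Set.Ici k, mX j
    have hshift : Measurable fun ω i => X (k + i) ω := measurable_pi_lambda _ fun i =>
      (comap_measurable (X (k + i))).mono (le_iSup₂ (f := fun j _ => mX j) (k + i) (by simp)) le_rfl
    exact hsum.comp hshift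
  · exact Finset.measurable_sum _ fun i hi => ((comap_measurable (X i)).mono
      (le_iSup₂ (f := fun j _ => mX j) i (by simpa using hi)) le_rfl).const_mul _

theorem integral_add_pow_of_indepFun {Ω : Type*} [MeasurableSpace Ω] {P : Measure Ω}
    {Y Z : Ω → ℝ} (hYZ : IndepFun Y Z P) (hY : ∀ i, Integrable (fun ω => Y ω ^ i) P)
    (hZ : ∀ j, Integrable (fun ω => Z ω ^ j) P) (N : ℕ) :
    ∫ ω, (Y ω + Z ω) ^ N ∂P
      = ∑ i ∈ range (N + 1), (∫ ω, Y ω ^ i ∂P) * (∫ ω, Z ω ^ (N - i) ∂P) * N.choose i := by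
  have hpow (i j : ℕ) : IndepFun (fun ω => Y ω ^ i) (fun ω => Z ω ^ j) P :=
    hYZ.comp (measurable_id.pow_const i) (measurable_id.pow_const j)
  simp_rw [add_pow]
  rw [integral_finsetSum _ fun i _ => ?_]
  · refine sum_congr rfl fun i _ => ?_
    rw [integral_mul_const, ← (hpow i (N - i)).integral_fun_mul_eq_mul_integral
      (hY i).aestronglyMeasurable (hZ _).aestronglyMeasurable]
  · exact ((hpow i (N - i)).integrable_mul (hY i) (hZ _)).mul_const _

lemma integrable_pow_of_ae_abs_le {Ω : Type*} [MeasurableSpace Ω] {P : Measure Ω}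
    [IsFiniteMeasure P] {f : Ω → ℝ} (hf : AEStronglyMeasurable f P) {C : ℝ}
    (hC : ∀ᵐ ω ∂P, |f ω| ≤ C) (p : ℕ) : Integrable (fun ω => f ω ^ p) P :=
  .of_bound (hf.pow p) (C ^ p) <| hC.mono fun ω h => by
    rw [Real.norm_eq_abs, abs_pow]; exact pow_le_pow_left₀ (abs_nonneg _) h p

lemma sum_range_two_mul_add_one_of_odd {M : Type*} [AddCommMonoid M] (f : ℕ → M) (n : ℕ)
    (hf : ∀ i ≤ 2 * n, Odd i → f i = 0) :
    ∑ i ∈ range (2 * n + 1), f i = ∑ j ∈ range (n + 1), f (2 * j) := by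
  induction n with
  | zero => simp
  | succ n ih =>
    rw [show 2 * (n + 1) + 1 = 2 * n + 1 + 1 + 1 by ring, sum_range_succ, sum_range_succ,
      ih fun i hi => hf i (by omega), hf (2 * n + 1) (by omega) (odd_two_mul_add_one n), add_zero,
      sum_range_succ (fun j => f (2 * j)) (n + 1)]
    rfl

section GeometricWeights

variable {c : ℝ} {x : ℕ → ℝ}

lemma abs_pow_succ_mul_le (hc : |c| ≤ 1) {a : ℝ} (ha : |a| ≤ 1) (i : ℕ) :
    |c ^ (i + 1) * a| ≤ |c| ^ i := by
  rw [abs_mul, abs_pow, pow_succ, mul_assoc]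
  exact mul_le_of_le_one_right (by positivity) (mul_le_one₀ hc (abs_nonneg a) ha)

lemma summable_pow_succ_mul (hc : |c| < 1) (hx : ∀ i, |x i| ≤ 1) :
    Summable fun i => c ^ (i + 1) * x i :=
  .of_norm_bounded (summable_geometric_of_lt_one (abs_nonneg c) hc)
    fun i => abs_pow_succ_mul_le hc.le (hx i) i

lemma abs_tsum_pow_succ_mul_le (hc : |c| < 1) (hx : ∀ i, |x i| ≤ 1) :
    |∑' i, c ^ (i + 1) * x i| ≤ (1 - |c|)⁻¹ := by
  rw [← Real.norm_eq_abs]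
  exact tsum_of_norm_bounded (hasSum_geometric_of_lt_one (abs_nonneg c) hc)
    fun i => abs_pow_succ_mul_le hc.le (hx i) i

lemma abs_sum_range_pow_succ_mul_le (hc : |c| < 1) (hx : ∀ i, |x i| ≤ 1) (k : ℕ) :
    |∑ i ∈ range k, c ^ (i + 1) * x i| ≤ (1 - |c|)⁻¹ :=
  (abs_sum_le_sum_abs _ _).trans <| (sum_le_sum fun i _ => abs_pow_succ_mul_le hc.le (hx i) i).trans
    (sum_le_hasSum _ (fun i _ => by positivity) (hasSum_geometric_of_lt_one (abs_nonneg c) hc))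

lemma tsum_pow_succ_mul_eq_sum_range_add (hx : Summable fun i => c ^ (i + 1) * x i) (k : ℕ) :
    ∑' i, c ^ (i + 1) * x i
      = ∑ i ∈ range k, c ^ (i + 1) * x i + c ^ k * ∑' i, c ^ (i + 1) * x (k + i) := by
  rw [← hx.sum_add_tsum_nat_add k, ← tsum_mul_left]
  congr 1
  exact tsum_congr fun i => by rw [add_comm k i]; ring

end GeometricWeights

structure IsRademacherSeq {Ω ι : Type*} [MeasurableSpace Ω] (X : ι → Ω → ℝ) (P : Measure Ω) :
    Prop where
  measurable : ∀ i, Measurable (X i)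
  iIndepFun : iIndepFun X P
  measure_eq_one : ∀ i, P {ω | X i ω = 1} = 1 / 2
  measure_eq_neg_one : ∀ i, P {ω | X i ω = -1} = 1 / 2

namespace IsRademacherSeq

variable {Ω ι : Type*} [MeasurableSpace Ω] {P : Measure Ω} {X : ι → Ω → ℝ}

lemma ae_eq_one_or_eq_neg_one [IsProbabilityMeasure P] (hX : IsRademacherSeq X P) (i : ι) :
    ∀ᵐ ω ∂P, X i ω = 1 ∨ X i ω = -1 := by
  have hmeas (a : ℝ) : MeasurableSet {ω | X i ω = a} :=
    measurableSet_eq_fun (hX.measurable i) measurable_const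
  have hdisj : Disjoint {ω | X i ω = 1} {ω | X i ω = -1} :=
    Set.disjoint_left.2 fun ω (h : X i ω = 1) (h' : X i ω = -1) => by norm_num [h] at h'
  refine (ae_iff_measure_eq (((hmeas 1).union (hmeas (-1))).nullMeasurableSet)).2 ?_
  change P ({ω | X i ω = 1} ∪ {ω | X i ω = -1}) = _
  rw [measure_union hdisj (hmeas (-1)), hX.measure_eq_one, hX.measure_eq_neg_one,
    ENNReal.add_halves, measure_univ]

lemma ae_abs_le_one [IsProbabilityMeasure P] [Countable ι] (hX : IsRademacherSeq X P) :
    ∀ᵐ ω ∂P, ∀ i, |X i ω| ≤ 1 :=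
  ae_all_iff.2 fun i => (hX.ae_eq_one_or_eq_neg_one i).mono fun ω h => by
    rcases h with h | h <;> simp [h]

lemma measure_forall_eq_boolSign (hX : IsRademacherSeq X P) {κ : Type*} [Fintype κ]
    {g : κ → ι} (hg : Injective g) (ε : κ → Bool) :
    P {ω | ∀ j, X (g j) ω = boolSign (ε j)} = 2⁻¹ ^ Fintype.card κ := by
  have hset : {ω | ∀ j, X (g j) ω = boolSign (ε j)}
      = ⋂ j ∈ (Finset.univ : Finset κ), X (g j) ⁻¹' {boolSign (ε j)} := by
    ext ω; simp
  rw [hset, (hX.iIndepFun.precomp hg).measure_inter_preimage_eq_mul _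
    fun j _ => measurableSet_singleton _, ← Finset.card_univ, ← Finset.prod_const]
  refine Finset.prod_congr rfl fun j _ => ?_
  cases ε j
  · exact (hX.measure_eq_neg_one (g j)).trans (one_div 2)
  · exact (hX.measure_eq_one (g j)).trans (one_div 2)

theorem integral_comp_eq_sum_boolSign [IsProbabilityMeasure P] (hX : IsRademacherSeq X P)
    {κ : Type*} [Fintype κ] [DecidableEq κ] {g : κ → ι} (hg : Injective g) (f : (κ → ℝ) → ℝ) :
    ∫ ω, f (fun j => X (g j) ω) ∂P
      = (∑ ε : κ → Bool, f (fun j => boolSign (ε j))) / 2 ^ Fintype.card κ := by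
  set A : (κ → Bool) → Set Ω := fun ε => {ω | ∀ j, X (g j) ω = boolSign (ε j)}
  have hA (ε) : MeasurableSet (A ε) := by
    simp only [A, Set.ofPred_forall]
    exact .iInter fun j => measurableSet_eq_fun (hX.measurable _) measurable_const
  -- almost surely exactly one of the events `A ε` occurs
  have hae : (fun ω => f (fun j => X (g j) ω))
      =ᵐ[P] fun ω => ∑ ε, (A ε).indicator (fun _ => f (fun j => boolSign (ε j))) ω := by
    filter_upwards [ae_all_iff.2 fun j => hX.ae_eq_one_or_eq_neg_one (g j)] with ω hω
    set ε₀ : κ → Bool := fun j => decide (X (g j) ω = 1)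
    have hε₀ (j) : X (g j) ω = boolSign (ε₀ j) := by
      rcases hω j with h | h <;> norm_num [ε₀, h]
    have hmem (ε) : ω ∈ A ε ↔ ε₀ = ε := by
      simp only [A, Set.mem_ofPred_eq, hε₀, funext_iff, boolSign_injective.eq_iff]
    simp only [Set.indicator_apply, hmem, Finset.sum_ite_eq, Finset.mem_univ, if_true, ← hε₀]
  rw [integral_congr_ae hae, integral_finsetSum _ fun ε _ => (integrable_const _).indicator (hA ε),
    Finset.sum_div]
  refine Finset.sum_congr rfl fun ε _ => ?_
  rw [integral_indicator_const _ (hA ε), measureReal_def, hX.measure_forall_eq_boolSign hg,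
    smul_eq_mul, ENNReal.toReal_pow, ENNReal.toReal_inv, ENNReal.toReal_ofNat, inv_pow,
    div_eq_mul_inv, mul_comm]

lemma map_eq_map [IsProbabilityMeasure P] (hX : IsRademacherSeq X P) (i j : ι) :
    P.map (X i) = P.map (X j) := by
  have hlaw (i : ι) {s : Set ℝ} (hs : MeasurableSet s) : (P.map (X i)).real s
      = (∑ ε : Unit → Bool, s.indicator 1 (boolSign (ε ()))) / 2 ^ Fintype.card Unit := by
    rw [map_measureReal_apply (hX.measurable i) hs, ← integral_indicator_one (hX.measurable i hs),
      ← hX.integral_comp_eq_sum_boolSign (g := fun _ : Unit => i) (injective_of_subsingleton _)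
        fun x => s.indicator 1 (x ())]
    rfl
  ext s hs
  rw [← ENNReal.toReal_eq_toReal_iff' (measure_ne_top _ _) (measure_ne_top _ _)]
  exact (hlaw i hs).trans (hlaw j hs).symm

lemma identDistrib_shift [IsProbabilityMeasure P] {X : ℕ → Ω → ℝ} (hX : IsRademacherSeq X P)
    (r : ℕ) : IdentDistrib (fun ω i => X (r + i) ω) (fun ω i => X i ω) P P where
  aemeasurable_fst := (measurable_pi_lambda _ fun i => hX.measurable (r + i)).aemeasurable
  aemeasurable_snd := (measurable_pi_lambda _ hX.measurable).aemeasurable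
  map_eq := by
    rw [(hX.iIndepFun.precomp (add_right_injective r)).map_fun_eq_infinitePi_map
        fun i => hX.measurable (r + i), hX.iIndepFun.map_fun_eq_infinitePi_map hX.measurable]
    congr 1
    exact funext fun i => hX.map_eq_map (r + i) i

lemma integral_sum_mul_pow_of_odd [IsProbabilityMeasure P] [DecidableEq ι]
    (hX : IsRademacherSeq X P) (s : Finset ι) (a : ι → ℝ) {p : ℕ} (hp : Odd p) :
    ∫ ω, (∑ i ∈ s, a i * X i ω) ^ p ∂P = 0 := by
  simp_rw [← sum_coe_sort s]
  rw [hX.integral_comp_eq_sum_boolSign Subtype.val_injective fun x => (∑ j : s, a j * x j) ^ p]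
  have hsymm := sum_boolSign_neg (κ := s) fun x => (∑ j : s, a j * x j) ^ p
  simp only [mul_neg, sum_neg_distrib, hp.neg_pow] at hsymm
  rw [div_eq_zero_iff]
  left
  linarith

lemma integral_sum_range_inv_pow_succ_mul_pow_two_mul [IsProbabilityMeasure P]
    {X : ℕ → Ω → ℝ} (hX : IsRademacherSeq X P) {l : ℝ} (hl : l ≠ 0) {k : ℕ} (hk : 1 ≤ k) (u : ℕ) :
    ∫ ω, (∑ i ∈ range k, l⁻¹ ^ (i + 1) * X i ω) ^ (2 * u) ∂P = l⁻¹ ^ (2 * k * u) * W k u l := by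
  -- reversing the block puts its weights in the order used by `W`
  have hrev (ω : Ω) : ∑ i ∈ range k, l⁻¹ ^ (i + 1) * X i ω
      = l⁻¹ ^ k * ∑ j : Fin k, l ^ (j : ℕ) * X (Fin.rev j) ω := by
    rw [← Fin.sum_univ_eq_sum_range (fun i => l⁻¹ ^ (i + 1) * X i ω),
      ← Equiv.sum_comp Fin.revPerm, mul_sum]
    refine sum_congr rfl fun j _ => ?_
    have hsplit : l⁻¹ ^ k = l⁻¹ ^ ((Fin.rev j : ℕ) + 1) * (l ^ (j : ℕ))⁻¹ := by
      rw [← inv_pow, ← pow_add, Fin.val_rev]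
      congr 1
      omega
    rw [Fin.revPerm_apply, hsplit]
    field_simp
  simp_rw [hrev, mul_pow]
  rw [integral_const_mul, hX.integral_comp_eq_sum_boolSign
      (g := fun j : Fin k => (Fin.rev j : ℕ)) (Fin.val_injective.comp Fin.rev_injective)
      fun x : Fin k → ℝ => (∑ j : Fin k, l ^ (j : ℕ) * x j) ^ (2 * u),
    W_eq_sum_boolSign hk, Fintype.card_fin, ← pow_mul, mul_comm 2 k, mul_assoc]

section SelfSimilarity

variable [IsProbabilityMeasure P] {X : ℕ → Ω → ℝ} (hX : IsRademacherSeq X P) {c : ℝ}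
include hX

lemma integrable_tsum_pow (hc : |c| < 1) (r b : ℕ) :
    Integrable (fun ω => (∑' i, c ^ (i + 1) * X (r + i) ω) ^ b) P :=
  integrable_pow_of_ae_abs_le
    (Measurable.tsum fun i => (hX.measurable (r + i)).const_mul _).aestronglyMeasurable
    (hX.ae_abs_le_one.mono fun _ hω => abs_tsum_pow_succ_mul_le hc fun i => hω (r + i)) b

lemma integrable_sum_range_pow (hc : |c| < 1) (k b : ℕ) :
    Integrable (fun ω => (∑ i ∈ range k, c ^ (i + 1) * X i ω) ^ b) P :=
  integrable_pow_of_ae_abs_le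
    (Finset.measurable_sum _ fun i _ => (hX.measurable i).const_mul _).aestronglyMeasurable
    (hX.ae_abs_le_one.mono fun _ hω => abs_sum_range_pow_succ_mul_le hc hω k) b

lemma integral_tsum_shift_pow (r b : ℕ) :
    ∫ ω, (∑' i, c ^ (i + 1) * X (r + i) ω) ^ b ∂P = ∫ ω, (∑' i, c ^ (i + 1) * X i ω) ^ b ∂P :=
  ((hX.identDistrib_shift r).comp
    ((Measurable.tsum fun i => (measurable_pi_apply i).const_mul _).pow_const b)).integral_eq

theorem integral_tsum_pow_eq_sum_range (hc : |c| < 1) (k N : ℕ) :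
    ∫ ω, (∑' i, c ^ (i + 1) * X i ω) ^ N ∂P
      = ∑ j ∈ range (N + 1), c ^ (k * j) * (∫ ω, (∑' i, c ^ (i + 1) * X i ω) ^ j ∂P)
          * (∫ ω, (∑ i ∈ range k, c ^ (i + 1) * X i ω) ^ (N - j) ∂P) * N.choose j := by
  set T : Ω → ℝ := fun ω => c ^ k * ∑' i, c ^ (i + 1) * X (k + i) ω
  set Y : Ω → ℝ := fun ω => ∑ i ∈ range k, c ^ (i + 1) * X i ω
  have hdecomp : ∀ᵐ ω ∂P, ∑' i, c ^ (i + 1) * X i ω = T ω + Y ω :=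
    hX.ae_abs_le_one.mono fun ω hω => by
      rw [tsum_pow_succ_mul_eq_sum_range_add (summable_pow_succ_mul hc hω) k, add_comm]
  have hTY : IndepFun T Y P :=
    (hX.iIndepFun.indepFun_tsum_shift_sum_range hX.measurable _ _ k).comp
      (measurable_const_mul _) measurable_id
  have hTmoment (b : ℕ) :
      ∫ ω, T ω ^ b ∂P = c ^ (k * b) * ∫ ω, (∑' i, c ^ (i + 1) * X i ω) ^ b ∂P := by
    simp only [T, mul_pow]
    rw [integral_const_mul, hX.integral_tsum_shift_pow, pow_mul]
  have hTint (b : ℕ) : Integrable (fun ω => T ω ^ b) P := by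
    simp only [T, mul_pow]
    exact (hX.integrable_tsum_pow hc k b).const_mul _
  rw [integral_congr_ae (g := fun ω => (T ω + Y ω) ^ N) (hdecomp.mono fun ω h => by simp only [h]),
    integral_add_pow_of_indepFun hTY hTint (hX.integrable_sum_range_pow hc k)]
  simp only [hTmoment, Y]

theorem integral_tsum_pow_two_mul_eq_sum_range {l : ℝ} (hl : 1 < l) {k : ℕ} (hk : 1 ≤ k) (n : ℕ) :
    ∫ ω, (∑' i, l⁻¹ ^ (i + 1) * X i ω) ^ (2 * n) ∂P
      = l⁻¹ ^ (2 * k * n) * ∑ j ∈ range (n + 1), ((2 * n).choose (2 * j) : ℝ)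
          * (∫ ω, (∑' i, l⁻¹ ^ (i + 1) * X i ω) ^ (2 * j) ∂P) * W k (n - j) l := by
  have hc : |l⁻¹| < 1 := by
    rw [abs_inv, abs_of_pos (by linarith)]
    exact inv_lt_one_of_one_lt₀ hl
  set M : ℕ → ℝ := fun b => ∫ ω, (∑' i, l⁻¹ ^ (i + 1) * X i ω) ^ b ∂P
  set q : ℕ → ℝ := fun b => ∫ ω, (∑ i ∈ range k, l⁻¹ ^ (i + 1) * X i ω) ^ b ∂P
  have hodd : ∀ i ≤ 2 * n, Odd i → l⁻¹ ^ (k * i) * M i * q (2 * n - i) * (2 * n).choose i = 0 := by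
    rintro i hi ⟨t, rfl⟩
    have hq : q (2 * n - (2 * t + 1)) = 0 :=
      hX.integral_sum_mul_pow_of_odd (range k) (fun i => l⁻¹ ^ (i + 1)) ⟨n - t - 1, by omega⟩
    rw [hq, mul_zero, zero_mul]
  have heven (j : ℕ) (hj : j ≤ n) :
      l⁻¹ ^ (k * (2 * j)) * M (2 * j) * q (2 * n - 2 * j) * (2 * n).choose (2 * j)
        = l⁻¹ ^ (2 * k * n) * ((2 * n).choose (2 * j) * M (2 * j) * W k (n - j) l) := by
    obtain ⟨d, rfl⟩ : ∃ d, n = j + d := ⟨n - j, by omega⟩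
    have hq : q (2 * d) = l⁻¹ ^ (2 * k * d) * W k d l :=
      hX.integral_sum_range_inv_pow_succ_mul_pow_two_mul (by positivity) hk d
    rw [show 2 * (j + d) - 2 * j = 2 * d by omega, Nat.add_sub_cancel_left, hq]
    ring
  rw [hX.integral_tsum_pow_eq_sum_range hc k (2 * n), sum_range_two_mul_add_one_of_odd _ n hodd,
    mul_sum]
  exact sum_congr rfl fun j hj => heven j (by simpa [Nat.lt_succ_iff] using hj)

end SelfSimilarity

end IsRademacherSeq

/-- `m_(2n)(λ) = (λ^(2kn) - 1)⁻¹ ∑_{j=0}^{n-1} C(2n,2j) m_(2j)(λ) W^(k)_(2(n-j))(λ)`. -/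
theorem stmt_6 {Ω : Type*} [MeasurableSpace Ω] (P : Measure Ω) [IsProbabilityMeasure P]
    (X : ℕ → Ω → ℝ) (hmeas : ∀ n, Measurable (X n))
    (hindep : iIndepFun X P)
    (h1 : ∀ n, P {ω | X n ω = 1} = 1 / 2) (h2 : ∀ n, P {ω | X n ω = -1} = 1 / 2)
    (S : ℝ → Ω → ℝ)
    (hS : ∀ l : ℝ, 1 < l → ∀ ω, S l ω = ∑' n : ℕ, l ^ (-(n + 1 : ℤ)) * X n ω)
    (m : ℝ → ℕ → ℝ) (hm : ∀ l k, m l k = ∫ ω, (S l ω) ^ k ∂P)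
    (l : ℝ) (hl : 1 < l) (n : ℕ) (hn : 1 ≤ n) (k : ℕ) (hk : 1 ≤ k) :
    m l (2 * n) = (l ^ (2 * k * n) - 1)⁻¹ *
      ∑ j ∈ Finset.range n, ((2 * n).choose (2 * j) : ℝ) * m l (2 * j) * W k (n - j) l := by
  have hX : IsRademacherSeq X P := ⟨hmeas, hindep, h1, h2⟩
  have hmS (b : ℕ) : m l b = ∫ ω, (∑' i, l⁻¹ ^ (i + 1) * X i ω) ^ b ∂P := by
    simp only [hm, hS l hl, ← Nat.cast_succ, zpow_neg, zpow_natCast, inv_pow]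
  have hrec := hX.integral_tsum_pow_two_mul_eq_sum_range hl hk n
  simp only [← hmS] at hrec
  rw [sum_range_succ, Nat.sub_self, W_zero, Nat.choose_self, Nat.cast_one, one_mul, mul_one,
    inv_pow] at hrec
  have hL : l ^ (2 * k * n) - 1 ≠ 0 := sub_ne_zero.2 (one_lt_pow₀ hl (by positivity)).ne'
  field_simp at hrec ⊢
  linarith
end

section
/- For every λ > 1 and every integer n ≥ 0, m_{2n}(λ) = Σ_{j=0}^{n} C(2n, 2j) · λ^{2j} · m_{2j}(λ²) · m_{2(n−j)}(λ²). -/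
/-!
Split the series `S(λ) = ∑ λ^{-(k+1)} X_k` into its even- and odd-indexed terms:
`S(λ) = λ A + B` with `A = ∑ λ^{-2(k+1)} X_{2k}` and `B = ∑ λ^{-2(k+1)} X_{2k+1}`.
Since `(X_{2k})`, `(X_{2k+1})` and `(X_k)` are all i.i.d. Rademacher sequences, `A` and `B` are
independent and each has the law of `S(λ²)`. Expanding `(λ A + B)^{2n}` binomially, the odd
moments drop out because a Rademacher series is symmetric.
-/

open MeasureTheory ProbabilityTheory Finset
open scoped ENNReal

lemma comap_pi_le_iSup_comap {Ω ι κ β : Type*} [mβ : MeasurableSpace β] (f : ι → Ω → β)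
    (e : κ → ι) :
    MeasurableSpace.comap (fun ω k => f (e k) ω) MeasurableSpace.pi
      ≤ ⨆ i ∈ Set.range e, mβ.comap (f i) := by
  let _ : MeasurableSpace Ω := ⨆ i ∈ Set.range e, mβ.comap (f i)
  refine Measurable.comap_le (measurable_pi_iff.2 fun k => measurable_iff_comap_le.2 ?_)
  exact le_iSup₂ (f := fun i (_ : i ∈ Set.range e) => mβ.comap (f i)) (e k) ⟨k, rfl⟩

lemma ProbabilityTheory.iIndepFun.indepFun_of_disjoint_range {Ω ι κ κ' β : Type*}
    [MeasurableSpace Ω] {P : Measure Ω} [MeasurableSpace β] {f : ι → Ω → β}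
    (hf : ∀ i, Measurable (f i)) (h : iIndepFun f P) {g : κ → ι} {g' : κ' → ι}
    (hg : Disjoint (Set.range g) (Set.range g')) :
    IndepFun (fun ω k => f (g k) ω) (fun ω k => f (g' k) ω) P := by
  rw [IndepFun_iff_Indep]
  exact indep_of_indep_of_le (indep_iSup_of_disjoint (fun i => (hf i).comap_le) h.iIndep hg)
    (comap_pi_le_iSup_comap f g) (comap_pi_le_iSup_comap f g')

lemma summable_mul_of_abs_le_one {c v : ℕ → ℝ} (hc : Summable c) (hv : ∀ k, |v k| ≤ 1) :
    Summable fun k => c k * v k :=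
  hc.abs.of_norm_bounded fun k => by
    simpa [abs_mul] using mul_le_of_le_one_right (abs_nonneg (c k)) (hv k)

lemma abs_tsum_mul_le {c v : ℕ → ℝ} (hc : Summable c) (hv : ∀ k, |v k| ≤ 1) :
    |∑' k, c k * v k| ≤ ∑' k, |c k| := by
  refine (norm_tsum_le_tsum_norm (summable_mul_of_abs_le_one hc hv).norm).trans ?_
  refine (summable_mul_of_abs_le_one hc hv).norm.tsum_le_tsum (fun k => ?_) hc.abs
  simpa [abs_mul] using mul_le_of_le_one_right (abs_nonneg (c k)) (hv k)

lemma measurable_tsum_mul (c : ℕ → ℝ) : Measurable fun v : ℕ → ℝ => ∑' k, c k * v k :=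
  Measurable.tsum fun k => (measurable_pi_apply k).const_mul _

lemma summable_zpow_neg_succ {r : ℝ} (hr : 1 < r) : Summable fun k : ℕ => r ^ (-(k + 1 : ℤ)) := by
  refine ((summable_geometric_of_lt_one (by positivity) (inv_lt_one_of_one_lt₀ hr)).mul_left
    r⁻¹).congr fun k => ?_
  rw [← pow_succ', ← zpow_natCast, inv_zpow', Nat.cast_succ]

lemma tsum_zpow_neg_succ_mul_eq_even_add_odd {l : ℝ} (hl : 1 < l) {v : ℕ → ℝ}
    (hv : ∀ k, |v k| ≤ 1) :
    ∑' k : ℕ, l ^ (-(k + 1 : ℤ)) * v k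
      = l * ∑' k : ℕ, (l ^ 2) ^ (-(k + 1 : ℤ)) * v (2 * k)
        + ∑' k : ℕ, (l ^ 2) ^ (-(k + 1 : ℤ)) * v (2 * k + 1) := by
  have hl0 : l ≠ 0 := by positivity
  have hs := summable_mul_of_abs_le_one (summable_zpow_neg_succ hl) hv
  rw [← tsum_even_add_odd (f := fun k : ℕ => l ^ (-(k + 1 : ℤ)) * v k)
    (hs.comp_injective (i := fun k => 2 * k) (by intro a b h; simp only at h; omega))
    (hs.comp_injective (i := fun k => 2 * k + 1) (by intro a b h; simp only at h; omega)),
    ← tsum_mul_left]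
  congr 1 <;> congr 1 <;> ext k
  · rw [← mul_assoc, ← zpow_natCast l 2, ← zpow_mul, ← zpow_one_add₀ hl0]
    congr 2
  · rw [← zpow_natCast l 2, ← zpow_mul]
    congr 2

lemma Finset.sum_range_two_mul_add_one_eq_of_odd {M : Type*} [AddCommMonoid M] {f : ℕ → M}
    (hf : ∀ i, Odd i → f i = 0) (n : ℕ) :
    ∑ i ∈ range (2 * n + 1), f i = ∑ j ∈ range (n + 1), f (2 * j) := by
  induction n with
  | zero => simp
  | succ n ih =>
    rw [show 2 * (n + 1) + 1 = 2 * n + 1 + 1 + 1 by ring, sum_range_succ, sum_range_succ, ih,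
      hf _ (odd_two_mul_add_one n), add_zero, sum_range_succ _ (n + 1)]
    rfl

noncomputable def rademacher : Measure ℝ :=
  (2⁻¹ : ℝ≥0∞) • (Measure.dirac 1 + Measure.dirac (-1))

instance : IsProbabilityMeasure rademacher :=
  ⟨by simp [rademacher, ENNReal.inv_two_add_inv_two]⟩

lemma rademacher_map_neg : rademacher.map Neg.neg = rademacher := by
  simp [rademacher, Measure.map_smul, Measure.map_add _ _ measurable_neg, Measure.map_dirac,
    add_comm]

lemma ae_abs_le_one_rademacher : ∀ᵐ x ∂rademacher, |x| ≤ 1 := by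
  simp [rademacher]

lemma MeasureTheory.Measure.eq_rademacher {μ : Measure ℝ} [IsProbabilityMeasure μ]
    (h1 : μ {1} = 1 / 2) (h2 : μ {-1} = 1 / 2) : μ = rademacher := by
  have hdisj : Disjoint ({1} : Set ℝ) {-1} := by norm_num
  have hsupp : μ ({1} ∪ {-1})ᶜ = 0 := by
    rw [prob_compl_eq_zero_iff ((measurableSet_singleton _).union (measurableSet_singleton _)),
      measure_union hdisj (measurableSet_singleton _), h1, h2, ENNReal.add_halves]
  calc μ = μ.restrict ({1} ∪ {-1}) := (Measure.restrict_eq_self_of_ae_mem hsupp).symm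
    _ = rademacher := by
      rw [Measure.restrict_union hdisj (measurableSet_singleton _), Measure.restrict_singleton,
        Measure.restrict_singleton, h1, h2, rademacher, smul_add, one_div]

noncomputable def rademacherMoment (c : ℕ → ℝ) (q : ℕ) : ℝ :=
  ∫ v, (∑' k, c k * v k) ^ q ∂(Measure.infinitePi fun _ : ℕ => rademacher)

lemma rademacherMoment_of_odd (c : ℕ → ℝ) {q : ℕ} (hq : Odd q) : rademacherMoment c q = 0 := by
  have hsymm : (Measure.infinitePi fun _ : ℕ => rademacher).map (fun v k => -v k)
      = Measure.infinitePi fun _ => rademacher := by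
    rw [Measure.infinitePi_map_pi _ fun _ => measurable_neg]
    simp_rw [rademacher_map_neg]
  have : rademacherMoment c q = -rademacherMoment c q := by
    conv_lhs => rw [rademacherMoment, ← hsymm]
    rw [integral_map (φ := fun (v : ℕ → ℝ) (k : ℕ) => -v k)
      (measurable_pi_iff.2 fun k => (measurable_pi_apply k).neg).aemeasurable
      ((measurable_tsum_mul c).pow_const q).aestronglyMeasurable]
    simp [tsum_neg, hq.neg_pow, integral_neg, rademacherMoment]
  linarith

section Rademacher

variable {Ω : Type*} [MeasurableSpace Ω] {P : Measure Ω}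

lemma map_eq_rademacher [IsProbabilityMeasure P] {Y : Ω → ℝ} (hY : Measurable Y)
    (h1 : P {ω | Y ω = 1} = 1 / 2) (h2 : P {ω | Y ω = -1} = 1 / 2) : P.map Y = rademacher := by
  have := Measure.isProbabilityMeasure_map (μ := P) hY.aemeasurable
  exact Measure.eq_rademacher (by rwa [Measure.map_apply hY (measurableSet_singleton _)])
    (by rwa [Measure.map_apply hY (measurableSet_singleton _)])

lemma ae_forall_abs_le_one {ι : Type*} [Countable ι] {Y : ι → Ω → ℝ} (hY : ∀ i, Measurable (Y i))
    (hlaw : ∀ i, P.map (Y i) = rademacher) : ∀ᵐ ω ∂P, ∀ i, |Y i ω| ≤ 1 :=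
  ae_all_iff.2 fun i => ae_of_ae_map (hY i).aemeasurable ((hlaw i) ▸ ae_abs_le_one_rademacher)

lemma integral_tsum_mul_pow_eq_rademacherMoment {Y : ℕ → Ω → ℝ} (hY : ∀ n, Measurable (Y n))
    (hind : iIndepFun Y P) (hlaw : ∀ n, P.map (Y n) = rademacher) (c : ℕ → ℝ) (q : ℕ) :
    ∫ ω, (∑' k, c k * Y k ω) ^ q ∂P = rademacherMoment c q := by
  rw [rademacherMoment, ← funext hlaw, ← hind.map_fun_eq_infinitePi_map hY,
    integral_map (measurable_pi_iff.2 hY).aemeasurable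
      ((measurable_tsum_mul c).pow_const q).aestronglyMeasurable]

lemma integrable_pow_mul_pow_of_abs_le [IsFiniteMeasure P] {A B : Ω → ℝ} (hA : Measurable A)
    (hB : Measurable B) {K : ℝ} (hAK : ∀ᵐ ω ∂P, |A ω| ≤ K) (hBK : ∀ᵐ ω ∂P, |B ω| ≤ K) (i j : ℕ) :
    Integrable (fun ω => A ω ^ i * B ω ^ j) P := by
  refine .of_bound ((hA.pow_const i).mul (hB.pow_const j)).aestronglyMeasurable (K ^ i * K ^ j) ?_
  filter_upwards [hAK, hBK] with ω hA hB
  rw [Real.norm_eq_abs, abs_mul, abs_pow, abs_pow]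
  exact mul_le_mul (pow_le_pow_left₀ (abs_nonneg _) hA i) (pow_le_pow_left₀ (abs_nonneg _) hB j)
    (by positivity) (pow_nonneg ((abs_nonneg _).trans hA) i)

lemma integral_mul_add_pow_of_indepFun [IsFiniteMeasure P] {A B : Ω → ℝ} (hA : Measurable A)
    (hB : Measurable B) (hAB : IndepFun A B P) {K : ℝ} (hAK : ∀ᵐ ω ∂P, |A ω| ≤ K)
    (hBK : ∀ᵐ ω ∂P, |B ω| ≤ K) (a : ℝ) (N : ℕ) :
    ∫ ω, (a * A ω + B ω) ^ N ∂P
      = ∑ i ∈ range (N + 1), a ^ i * N.choose i * (∫ ω, A ω ^ i ∂P) * ∫ ω, B ω ^ (N - i) ∂P := by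
  have hterm : ∀ i, (fun ω => (a * A ω) ^ i * B ω ^ (N - i) * N.choose i)
      = fun ω => a ^ i * N.choose i * (A ω ^ i * B ω ^ (N - i)) := fun i => by
    ext ω; ring
  simp_rw [add_pow]
  rw [integral_finsetSum _ fun i _ => by
    rw [hterm]; exact (integrable_pow_mul_pow_of_abs_le hA hB hAK hBK _ _).const_mul _]
  refine sum_congr rfl fun i _ => ?_
  have hindep : IndepFun (fun ω => A ω ^ i) (fun ω => B ω ^ (N - i)) P :=
    hAB.comp (measurable_id.pow_const i) (measurable_id.pow_const (N - i))
  rw [hterm, integral_const_mul, hindep.integral_fun_mul_eq_mul_integral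
    (hA.pow_const i).aestronglyMeasurable (hB.pow_const _).aestronglyMeasurable]
  ring

lemma integral_tsum_zpow_mul_pow_eq_sum [IsProbabilityMeasure P] {X : ℕ → Ω → ℝ}
    (hmeas : ∀ n, Measurable (X n)) (hindep : iIndepFun X P)
    (hlaw : ∀ n, P.map (X n) = rademacher) {l : ℝ} (hl : 1 < l) (N : ℕ) :
    ∫ ω, (∑' k : ℕ, l ^ (-(k + 1 : ℤ)) * X k ω) ^ N ∂P
      = ∑ i ∈ range (N + 1), l ^ i * N.choose i
          * rademacherMoment (fun k => (l ^ 2) ^ (-(k + 1 : ℤ))) i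
          * rademacherMoment (fun k => (l ^ 2) ^ (-(k + 1 : ℤ))) (N - i) := by
  set c : ℕ → ℝ := fun k => (l ^ 2) ^ (-(k + 1 : ℤ))
  have hmom {σ : ℕ → ℕ} (hσ : σ.Injective) q :
      ∫ ω, (∑' k, c k * X (σ k) ω) ^ q ∂P = rademacherMoment c q :=
    integral_tsum_mul_pow_eq_rademacherMoment (fun _ => hmeas _) (hindep.precomp hσ)
      (fun _ => hlaw _) c q
  have hmeasSum (σ : ℕ → ℕ) : Measurable fun ω => ∑' k, c k * X (σ k) ω :=
    Measurable.tsum fun _ => (hmeas _).const_mul _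
  have hbound (σ : ℕ → ℕ) : ∀ᵐ ω ∂P, |∑' k, c k * X (σ k) ω| ≤ ∑' k, |c k| := by
    filter_upwards [ae_forall_abs_le_one hmeas hlaw] with ω hω
    exact abs_tsum_mul_le (summable_zpow_neg_succ (by nlinarith)) fun k => hω (σ k)
  have hsplit : ∀ᵐ ω ∂P, (∑' k : ℕ, l ^ (-(k + 1 : ℤ)) * X k ω) ^ N
      = (l * ∑' k, c k * X (2 * k) ω + ∑' k, c k * X (2 * k + 1) ω) ^ N := by
    filter_upwards [ae_forall_abs_le_one hmeas hlaw] with ω hω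
    rw [tsum_zpow_neg_succ_mul_eq_even_add_odd hl hω]
  have hAB : IndepFun (fun ω => ∑' k, c k * X (2 * k) ω)
      (fun ω => ∑' k, c k * X (2 * k + 1) ω) P :=
    (hindep.indepFun_of_disjoint_range hmeas (g := (2 * ·)) (g' := (2 * · + 1))
      (Set.disjoint_left.2 fun _ ⟨a, ha⟩ ⟨b, hb⟩ => by simp only at ha hb; omega)).comp
      (measurable_tsum_mul c) (measurable_tsum_mul c)
  rw [integral_congr_ae hsplit,
    integral_mul_add_pow_of_indepFun (hmeasSum _) (hmeasSum _) hAB (hbound _) (hbound _)]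
  refine sum_congr rfl fun i _ => ?_
  rw [hmom (mul_right_injective₀ two_ne_zero), hmom (fun a b h => by omega)]

end Rademacher

/-- `m_(2n)(λ) = ∑_{j=0}^{n} C(2n,2j) λ^(2j) m_(2j)(λ²) m_(2(n-j))(λ²)`. -/
theorem stmt_9 {Ω : Type*} [MeasurableSpace Ω] (P : Measure Ω) [IsProbabilityMeasure P]
    (X : ℕ → Ω → ℝ) (hmeas : ∀ n, Measurable (X n))
    (hindep : iIndepFun X P)
    (h1 : ∀ n, P {ω | X n ω = 1} = 1 / 2) (h2 : ∀ n, P {ω | X n ω = -1} = 1 / 2)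
    (S : ℝ → Ω → ℝ)
    (hS : ∀ l : ℝ, 1 < l → ∀ ω, S l ω = ∑' n : ℕ, l ^ (-(n + 1 : ℤ)) * X n ω)
    (m : ℝ → ℕ → ℝ) (hm : ∀ l k, m l k = ∫ ω, (S l ω) ^ k ∂P)
    (l : ℝ) (hl : 1 < l) (n : ℕ) :
    m l (2 * n) = ∑ j ∈ Finset.range (n + 1),
      ((2 * n).choose (2 * j) : ℝ) * l ^ (2 * j) * m (l ^ 2) (2 * j) * m (l ^ 2) (2 * (n - j)) := by
  have hl2 : 1 < l ^ 2 := by nlinarith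
  have hlaw k : P.map (X k) = rademacher := map_eq_rademacher (hmeas k) (h1 k) (h2 k)
  have hmoment q : m (l ^ 2) q = rademacherMoment (fun k => (l ^ 2) ^ (-(k + 1 : ℤ))) q := by
    rw [hm, ← integral_tsum_mul_pow_eq_rademacherMoment hmeas hindep hlaw]
    simp_rw [hS _ hl2]
  rw [hm]
  simp_rw [hS l hl]
  rw [integral_tsum_zpow_mul_pow_eq_sum hmeas hindep hlaw hl,
    sum_range_two_mul_add_one_eq_of_odd fun i hi => by simp [rademacherMoment_of_odd _ hi]]
  refine sum_congr rfl fun j _ => ?_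
  rw [hmoment, hmoment, Nat.mul_sub]
  ring
end
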